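/- arXiv:math/0302225 — 3 statements merged into one kernel-verified Lean document; each statement's English description precedes it below -/
import Mathlib

section
/- Let n ≥ 5 be odd. An n-tuple ρ of transpositions of S_4 lies in C^n and satisfies μ(ρ) = (2 3) if and only if exactly one of the following holds: (i) ρ_{n−1} = (2 3) and the truncated tuple (ρ_0,…,ρ_{n−2}) either lies in C^{n−1} with μ((ρ_0,…,ρ_{n−2})) = id, or equals the tuple ρ̃_∅^{n−1} = ((1 2),(1 2),(1 4),…,(1 4)); (ii) ρ_{n−1} = (1 4) and (ρ_0,…,ρ_{n−2}) lies in C^{n−1} with μ((ρ_0,…,ρ_{n−2})) = (1 4)(2 3). -/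
open Equiv

/-- The braid relations on generators `β_0, …, β_{n-2}` (indexed by `Fin (n-1)`). -/
def braidRels (n : ℕ) : Set (FreeGroup (Fin (n - 1))) :=
  {r | (∃ i j : Fin (n - 1), (i : ℕ) + 2 ≤ (j : ℕ) ∧
          r = FreeGroup.of i * FreeGroup.of j * (FreeGroup.of i)⁻¹ * (FreeGroup.of j)⁻¹) ∨
       (∃ i j : Fin (n - 1), (i : ℕ) + 1 = (j : ℕ) ∧
          r = FreeGroup.of i * FreeGroup.of j * FreeGroup.of i *
              (FreeGroup.of j * FreeGroup.of i * FreeGroup.of j)⁻¹)}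

/-- The braid group `B_n` on `n` strands, presented by the Artin generators and relations. -/
def BraidGroup (n : ℕ) : Type := PresentedGroup (braidRels n)

instance (n : ℕ) : Group (BraidGroup n) :=
  inferInstanceAs (Group (PresentedGroup (braidRels n)))

/-- The Artin generator `β_i` of the braid group. -/
def braidGen (n : ℕ) (i : Fin (n - 1)) : BraidGroup n := PresentedGroup.of i

/-- The `i`-th Hurwitz twist `T_i` on `n`-tuples of elements of a group `G`. -/
def hurwitzTwist {G : Type*} [Group G] {n : ℕ} (i : Fin (n - 1)) (ρ : Fin n → G) :
    Fin n → G := fun k =>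
  if (k : ℕ) = (i : ℕ) then
    ρ k * ρ ⟨(i : ℕ) + 1, by have := i.isLt; omega⟩ * (ρ k)⁻¹
  else if (k : ℕ) = (i : ℕ) + 1 then
    ρ ⟨(i : ℕ), by have := i.isLt; omega⟩
  else ρ k

/-- `act` is a right action of `B_n` on `G^n` in which `β_i` acts by the Hurwitz twist `T_i`.
(Such an action exists and is unique.) -/
def IsHurwitzAction {G : Type*} [Group G] {n : ℕ}
    (act : (Fin n → G) → BraidGroup n → (Fin n → G)) : Prop :=
  (∀ ρ, act ρ 1 = ρ) ∧
  (∀ ρ a b, act ρ (a * b) = act (act ρ a) b) ∧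
  (∀ ρ (i : Fin (n - 1)), act ρ (braidGen n i) = hurwitzTwist i ρ)

/-- The ordered product `ρ_0 ρ_1 ⋯ ρ_{n-1}` of the entries of a tuple (boundary monodromy). -/
def tupleProd {G : Type*} [Monoid G] {n : ℕ} (ρ : Fin n → G) : G :=
  (List.ofFn ρ).prod

/-- The standard 3-fold covering `ρ^n(3) = ((1 2),(1 2),(2 3),…,(2 3))`. -/
def rho3 (n : ℕ) : Fin n → Perm (Fin 3) :=
  fun i => if (i : ℕ) < 2 then Equiv.swap 0 1 else Equiv.swap 1 2

/-- `C^n`: tuples of transpositions of `S_4` with first two entries `(1 2)`, the others in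
`{(2 3), (1 4)}`, whose entries generate `S_4`. -/
def Cset (n : ℕ) : Set (Fin n → Perm (Fin 4)) :=
  {ρ | (∀ i : Fin n, (i : ℕ) < 2 → ρ i = Equiv.swap 0 1) ∧
       (∀ i : Fin n, 2 ≤ (i : ℕ) → ρ i = Equiv.swap 1 2 ∨ ρ i = Equiv.swap 0 3) ∧
       Subgroup.closure (Set.range ρ) = ⊤}

open scoped Classical in
/-- The tuple `ρ_I^n`. -/
noncomputable def rhoI (n : ℕ) (I : Set ℕ) : Fin n → Perm (Fin 4) := fun i =>
  if (i : ℕ) < 2 then Equiv.swap 0 1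
  else if (i : ℕ) ∈ I then Equiv.swap 0 3
  else Equiv.swap 1 2

open scoped Classical in
/-- The tuple `ρ̃_I^n`. -/
noncomputable def rhoTilde (n : ℕ) (I : Set ℕ) : Fin n → Perm (Fin 4) := fun i =>
  if (i : ℕ) < 2 then Equiv.swap 0 1
  else if (i : ℕ) ∈ I then Equiv.swap 1 2
  else Equiv.swap 0 3

/-- The braid `γ = β_3 β_2 β_1² β_2 β_3² β_2 β_1`. -/
def gammaBraid (n : ℕ) (hn : 6 ≤ n) : BraidGroup n :=
  braidGen n ⟨3, by omega⟩ * braidGen n ⟨2, by omega⟩ * (braidGen n ⟨1, by omega⟩) ^ 2 *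
    braidGen n ⟨2, by omega⟩ * (braidGen n ⟨3, by omega⟩) ^ 2 * braidGen n ⟨2, by omega⟩ *
    braidGen n ⟨1, by omega⟩

/-- The braid `δ_4 = γ⁻¹ β_4 γ`. -/
def delta4 (n : ℕ) (hn : 6 ≤ n) : BraidGroup n :=
  (gammaBraid n hn)⁻¹ * braidGen n ⟨4, by omega⟩ * gammaBraid n hn

/-- The braid `η = β_5⁻¹ β_4⁻¹ β_3⁻¹ β_2⁻¹ β_6⁻¹ β_5⁻¹ β_4⁻¹ β_3⁻¹`. -/
def etaBraid (n : ℕ) (hn : 8 ≤ n) : BraidGroup n :=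
  (braidGen n ⟨5, by omega⟩)⁻¹ * (braidGen n ⟨4, by omega⟩)⁻¹ * (braidGen n ⟨3, by omega⟩)⁻¹ *
    (braidGen n ⟨2, by omega⟩)⁻¹ * (braidGen n ⟨6, by omega⟩)⁻¹ * (braidGen n ⟨5, by omega⟩)⁻¹ *
    (braidGen n ⟨4, by omega⟩)⁻¹ * (braidGen n ⟨3, by omega⟩)⁻¹

/-- The braid `δ_6 = η⁻¹ δ_4 η`. -/
def delta6 (n : ℕ) (hn : 8 ≤ n) : BraidGroup n :=
  (etaBraid n hn)⁻¹ * delta4 n (by omega) * etaBraid n hn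

/-- The product `β_a β_{a+1} ⋯ β_b` of consecutive Artin generators. -/
def betaChain (n a b : ℕ) (h : b < n - 1) : BraidGroup n :=
  (List.ofFn (fun k : Fin (b + 1 - a) =>
    braidGen n ⟨a + (k : ℕ), by have := k.isLt; omega⟩)).prod

/-- The elementary `M` move relative to the tuple `ρ`: inserting or deleting `β_i^3` at a
position where the two colors at `i, i+1` are non-commuting (interacting) transpositions. -/
def mMove {α : Type*} [DecidableEq α] {n : ℕ}
    (act : (Fin n → Perm α) → BraidGroup n → (Fin n → Perm α))
    (ρ : Fin n → Perm α) (x y : BraidGroup n) : Prop :=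
  ∃ g h : BraidGroup n, ∃ i : Fin (n - 1),
    (act ρ g ⟨(i : ℕ), by have := i.isLt; omega⟩).IsSwap ∧
    (act ρ g ⟨(i : ℕ) + 1, by have := i.isLt; omega⟩).IsSwap ∧
    act ρ g ⟨(i : ℕ), by have := i.isLt; omega⟩ *
        act ρ g ⟨(i : ℕ) + 1, by have := i.isLt; omega⟩ ≠
      act ρ g ⟨(i : ℕ) + 1, by have := i.isLt; omega⟩ *
        act ρ g ⟨(i : ℕ), by have := i.isLt; omega⟩ ∧
    x = g * braidGen n i ^ 3 * h ∧ y = g * h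

/-- The elementary `P` move relative to the tuple `ρ`: inserting or deleting `β_i^2` at a
position where the two colors at `i, i+1` are distinct commuting (disjoint) transpositions. -/
def pMove {α : Type*} [DecidableEq α] {n : ℕ}
    (act : (Fin n → Perm α) → BraidGroup n → (Fin n → Perm α))
    (ρ : Fin n → Perm α) (x y : BraidGroup n) : Prop :=
  ∃ g h : BraidGroup n, ∃ i : Fin (n - 1),
    (act ρ g ⟨(i : ℕ), by have := i.isLt; omega⟩).IsSwap ∧
    (act ρ g ⟨(i : ℕ) + 1, by have := i.isLt; omega⟩).IsSwap ∧
    act ρ g ⟨(i : ℕ), by have := i.isLt; omega⟩ ≠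
      act ρ g ⟨(i : ℕ) + 1, by have := i.isLt; omega⟩ ∧
    act ρ g ⟨(i : ℕ), by have := i.isLt; omega⟩ *
        act ρ g ⟨(i : ℕ) + 1, by have := i.isLt; omega⟩ =
      act ρ g ⟨(i : ℕ) + 1, by have := i.isLt; omega⟩ *
        act ρ g ⟨(i : ℕ), by have := i.isLt; omega⟩ ∧
    x = g * braidGen n i ^ 2 * h ∧ y = g * h

/-- MP-equivalence relative to `ρ`: the equivalence relation on `B_n` generated by the
`M` and `P` moves. -/
def mpEquiv {α : Type*} [DecidableEq α] {n : ℕ}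
    (act : (Fin n → Perm α) → BraidGroup n → (Fin n → Perm α))
    (ρ : Fin n → Perm α) : BraidGroup n → BraidGroup n → Prop :=
  Relation.EqvGen (fun x y => mMove act ρ x y ∨ pMove act ρ x y)

/-- `N(ρ)`: the set of braids MP-equivalent to the identity relative to `ρ`. -/
def Nset {α : Type*} [DecidableEq α] {n : ℕ}
    (act : (Fin n → Perm α) → BraidGroup n → (Fin n → Perm α))
    (ρ : Fin n → Perm α) : Set (BraidGroup n) :=
  {b | mpEquiv act ρ b 1}

/-! Here `swap 1 2` is (2 3) and `swap 0 3` is (1 4). A tuple of the right shape lies in `C^n`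
iff both (2 3) and (1 4) occur after position 1: without (2 3) (resp. (1 4)) every entry fixes
3 (resp. 4), while (1 2), (2 3), (1 4) generate `S_4`. If one of them is missing, the product
is `(1 2)² τ^(m-2) = 1` for even `m`. Splitting off the last entry `τ`, `μ(ρ) = μ(ρ') τ`. For
`τ = (2 3)` the truncation `ρ'` has trivial product and either contains (2 3), or does not and
then equals `ρ̃_∅`. For `τ = (1 4)` its product is `(1 4)(2 3) ≠ 1`, so `ρ'` contains (1 4)
besides the (2 3) that `ρ` requires. -/

theorem Equiv.Perm.closure_ne_top_of_forall_apply_eq {α : Type*} [DecidableEq α] [Nontrivial α]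
    {s : Set (Perm α)} (p : α) (hs : ∀ σ ∈ s, σ p = p) : Subgroup.closure s ≠ ⊤ := by
  intro htop
  obtain ⟨q, hqp⟩ := exists_ne p
  have hle : Subgroup.closure s ≤ MulAction.stabilizer (Perm α) p := (Subgroup.closure_le _).2 hs
  have hmem : swap p q ∈ MulAction.stabilizer (Perm α) p := hle (htop ▸ Subgroup.mem_top _)
  rw [MulAction.mem_stabilizer_iff, Perm.smul_def, swap_apply_left] at hmem
  exact hqp hmem

theorem Equiv.Perm.eq_top_of_forall_swap_mem {α : Type*} [DecidableEq α] [Finite α]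
    (H : Subgroup (Perm α)) (c : α) (h : ∀ x, swap c x ∈ H) : H = ⊤ := by
  rw [eq_top_iff, ← closure_isSwap, Subgroup.closure_le]
  rintro _ ⟨x, y, -, rfl⟩
  exact SubmonoidClass.swap_mem_trans H (swap_comm c x ▸ h x) (h y)

theorem Equiv.Perm.eq_top_of_swap01_swap12_swap03_mem (H : Subgroup (Perm (Fin 4)))
    (h01 : swap 0 1 ∈ H) (h12 : swap 1 2 ∈ H) (h03 : swap 0 3 ∈ H) : H = ⊤ := by
  refine eq_top_of_forall_swap_mem H 0 fun x => ?_
  fin_cases x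
  · exact (swap_self (0 : Fin 4)).symm ▸ H.one_mem
  · exact h01
  · exact SubmonoidClass.swap_mem_trans H h01 h12
  · exact h03

def CShape (n : ℕ) : Set (Fin n → Perm (Fin 4)) :=
  {ρ | (∀ i : Fin n, (i : ℕ) < 2 → ρ i = swap 0 1) ∧
       (∀ i : Fin n, 2 ≤ (i : ℕ) → ρ i = swap 1 2 ∨ ρ i = swap 0 3)}

def TailContains {G : Type*} {n : ℕ} (ρ : Fin n → G) (g : G) : Prop :=
  ∃ i : Fin n, 2 ≤ (i : ℕ) ∧ ρ i = g

theorem mem_Cset_iff {n : ℕ} {ρ : Fin n → Perm (Fin 4)} :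
    ρ ∈ Cset n ↔ ρ ∈ CShape n ∧ TailContains ρ (swap 1 2) ∧ TailContains ρ (swap 0 3) := by
  constructor
  · rintro ⟨h01, htail, hgen⟩
    refine ⟨⟨h01, htail⟩, ?_, ?_⟩ <;> by_contra hno
    · refine Perm.closure_ne_top_of_forall_apply_eq 2 (Set.forall_mem_range.2 fun i => ?_) hgen
      rcases lt_or_ge (i : ℕ) 2 with hi | hi
      · rw [h01 i hi]; decide
      · rw [(htail i hi).resolve_left fun h => hno ⟨i, hi, h⟩]; decide
    · refine Perm.closure_ne_top_of_forall_apply_eq 3 (Set.forall_mem_range.2 fun i => ?_) hgen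
      rcases lt_or_ge (i : ℕ) 2 with hi | hi
      · rw [h01 i hi]; decide
      · rw [(htail i hi).resolve_right fun h => hno ⟨i, hi, h⟩]; decide
  · rintro ⟨⟨h01, htail⟩, ⟨i, hi, h12⟩, ⟨j, -, h03⟩⟩
    refine ⟨h01, htail, Perm.eq_top_of_swap01_swap12_swap03_mem _ ?_ ?_ ?_⟩
    · exact Subgroup.subset_closure ⟨⟨0, by omega⟩, h01 _ two_pos⟩
    · exact Subgroup.subset_closure ⟨i, h12⟩
    · exact Subgroup.subset_closure ⟨j, h03⟩

theorem mem_CShape_succ_iff {m : ℕ} (hm : 2 ≤ m) {ρ : Fin (m + 1) → Perm (Fin 4)} :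
    ρ ∈ CShape (m + 1) ↔
      Fin.init ρ ∈ CShape m ∧ (ρ (Fin.last m) = swap 1 2 ∨ ρ (Fin.last m) = swap 0 3) := by
  simp only [CShape, Set.mem_ofPred_eq, Fin.forall_fin_succ', Fin.init, Fin.val_castSucc,
    Fin.val_last, hm, not_lt.2 hm, IsEmpty.forall_iff, and_true, true_implies]
  tauto

theorem tailContains_succ_iff {G : Type*} {m : ℕ} (hm : 2 ≤ m) {ρ : Fin (m + 1) → G} {g : G} :
    TailContains ρ g ↔ TailContains (Fin.init ρ) g ∨ ρ (Fin.last m) = g := by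
  simp [TailContains, Fin.exists_fin_succ', Fin.init, hm]

theorem eq_rhoTilde_empty_iff {m : ℕ} {ρ : Fin m → Perm (Fin 4)} :
    ρ = rhoTilde m ∅ ↔ ρ ∈ CShape m ∧ ¬TailContains ρ (swap 1 2) := by
  constructor
  · rintro rfl
    refine ⟨⟨fun i hi => by simp [rhoTilde, hi], fun i hi => by simp [rhoTilde, hi.not_gt]⟩, ?_⟩
    rintro ⟨i, hi, h⟩
    simp [rhoTilde, hi.not_gt] at h
    exact absurd h (by decide)
  · rintro ⟨⟨h01, htail⟩, hno⟩
    funext i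
    rcases lt_or_ge (i : ℕ) 2 with hi | hi
    · simp [rhoTilde, hi, h01 i hi]
    · simp [rhoTilde, hi.not_gt, (htail i hi).resolve_left fun h => hno ⟨i, hi, h⟩]

theorem tupleProd_eq_init_mul_last {G : Type*} [Monoid G] {m : ℕ} (ρ : Fin (m + 1) → G) :
    tupleProd ρ = tupleProd (Fin.init ρ) * ρ (Fin.last m) := by
  rw [tupleProd, tupleProd, List.ofFn_succ', List.prod_concat]
  rfl

theorem tupleProd_eq_of_tail_const {G : Type*} [Monoid G] {m : ℕ} (hm : 2 ≤ m) {ρ : Fin m → G}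
    {a g : G} (h01 : ∀ i : Fin m, (i : ℕ) < 2 → ρ i = a)
    (htail : ∀ i : Fin m, 2 ≤ (i : ℕ) → ρ i = g) :
    tupleProd ρ = a * a * g ^ (m - 2) := by
  obtain ⟨k, rfl⟩ : ∃ k, m = k + 2 := ⟨m - 2, by omega⟩
  have hrest : (List.ofFn fun i : Fin k => ρ i.succ.succ) = List.replicate k g := by
    rw [← List.ofFn_const]
    exact congrArg List.ofFn (funext fun i => htail _ (by simp))
  simp [tupleProd, List.ofFn_succ, hrest, h01 0 (by simp), h01 1 (by simp), mul_assoc]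

theorem tupleProd_eq_one_of_tail_eq_swap {m : ℕ} (hm : 2 ≤ m) (heven : Even m)
    {ρ : Fin m → Perm (Fin 4)} {x y : Fin 4} (h01 : ∀ i : Fin m, (i : ℕ) < 2 → ρ i = swap 0 1)
    (htail : ∀ i : Fin m, 2 ≤ (i : ℕ) → ρ i = swap x y) : tupleProd ρ = 1 := by
  obtain ⟨k, hk⟩ : Even (m - 2) := heven.tsub even_two
  rw [tupleProd_eq_of_tail_const hm h01 htail, hk, ← two_mul, pow_mul, sq, swap_mul_self,
    swap_mul_self, one_pow, one_mul]

theorem tupleProd_eq_one_of_not_tailContains {m : ℕ} (hm : 2 ≤ m) (heven : Even m)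
    {ρ : Fin m → Perm (Fin 4)} (hρ : ρ ∈ CShape m)
    (h : ¬TailContains ρ (swap 1 2) ∨ ¬TailContains ρ (swap 0 3)) : tupleProd ρ = 1 := by
  obtain ⟨h01, htail⟩ := hρ
  rcases h with hno | hno
  · exact tupleProd_eq_one_of_tail_eq_swap hm heven h01
      fun i hi => (htail i hi).resolve_left fun h => hno ⟨i, hi, h⟩
  · exact tupleProd_eq_one_of_tail_eq_swap hm heven h01
      fun i hi => (htail i hi).resolve_right fun h => hno ⟨i, hi, h⟩

theorem tailContains_swap03_of_not_tailContains_swap12 {m : ℕ} (hm : 3 ≤ m)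
    {ρ : Fin m → Perm (Fin 4)} (hρ : ρ ∈ CShape m) (h : ¬TailContains ρ (swap 1 2)) :
    TailContains ρ (swap 0 3) :=
  ⟨⟨2, hm⟩, le_rfl, (hρ.2 ⟨2, hm⟩ le_rfl).resolve_left fun h' => h ⟨⟨2, hm⟩, le_rfl, h'⟩⟩

theorem mem_Cset_and_tupleProd_eq_swap12_iff_of_last_eq_swap12 {m : ℕ} (hm : 3 ≤ m)
    (heven : Even m) {ρ : Fin (m + 1) → Perm (Fin 4)} (hlast : ρ (Fin.last m) = swap 1 2) :
    ρ ∈ Cset (m + 1) ∧ tupleProd ρ = swap 1 2 ↔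
      (Fin.init ρ ∈ Cset m ∧ tupleProd (Fin.init ρ) = 1) ∨ Fin.init ρ = rhoTilde m ∅ := by
  rw [mem_Cset_iff, mem_Cset_iff, mem_CShape_succ_iff (by omega), tailContains_succ_iff (by omega),
    tailContains_succ_iff (by omega), tupleProd_eq_init_mul_last, eq_rhoTilde_empty_iff, hlast]
  have hne : (swap 1 2 : Perm (Fin 4)) ≠ swap 0 3 := by decide
  simp only [hne, mul_eq_right, or_true, or_false, true_and, and_true, and_assoc]
  by_cases h23 : TailContains (Fin.init ρ) (swap 1 2)
  · simp [h23]
  · simp only [h23, false_and, and_false, not_false_eq_true, and_true, false_or]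
    exact ⟨And.left, fun hσ => ⟨hσ, tailContains_swap03_of_not_tailContains_swap12 hm hσ h23,
      tupleProd_eq_one_of_not_tailContains (by omega) heven hσ (.inl h23)⟩⟩

theorem mem_Cset_and_tupleProd_eq_swap12_iff_of_last_eq_swap03 {m : ℕ} (hm : 2 ≤ m)
    (heven : Even m) {ρ : Fin (m + 1) → Perm (Fin 4)} (hlast : ρ (Fin.last m) = swap 0 3) :
    ρ ∈ Cset (m + 1) ∧ tupleProd ρ = swap 1 2 ↔
      Fin.init ρ ∈ Cset m ∧ tupleProd (Fin.init ρ) = swap 0 3 * swap 1 2 := by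
  rw [mem_Cset_iff, mem_Cset_iff, mem_CShape_succ_iff hm, tailContains_succ_iff hm,
    tailContains_succ_iff hm, tupleProd_eq_init_mul_last, hlast, ← eq_mul_inv_iff_mul_eq,
    swap_inv, show swap 1 2 * swap 0 3 = (swap 0 3 * swap 1 2 : Perm (Fin 4)) by decide]
  have hne : (swap 0 3 : Perm (Fin 4)) ≠ swap 1 2 := by decide
  simp only [hne, or_true, or_false, and_true, and_assoc]
  refine and_congr_right fun hσ => and_congr_right fun _ => ⟨fun hprod => ⟨?_, hprod⟩, And.right⟩
  by_contra h03
  exact absurd (hprod ▸ tupleProd_eq_one_of_not_tailContains hm heven hσ (.inr h03)) (by decide)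

/-- Decomposition of `C^n_{(2 3)}` for odd `n`: a tuple of transpositions lies in `C^n` with
boundary monodromy `(2 3)` iff exactly one of: its last entry is `(2 3)` and its truncation
lies in `C^{n-1}_{id}` or equals `ρ̃_∅^{n-1}`, or its last entry is `(1 4)` and its
truncation lies in `C^{n-1}_{(1 4)(2 3)}`. -/
theorem stmt6 (n : ℕ) (hn : 5 ≤ n) (hodd : Odd n)
    (ρ : Fin n → Perm (Fin 4)) :
    (ρ ∈ Cset n ∧ tupleProd ρ = Equiv.swap 1 2) ↔
      Xor'
        (ρ ⟨n - 1, by omega⟩ = Equiv.swap 1 2 ∧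
          (((fun i : Fin (n - 1) => ρ (Fin.castLE (by omega) i)) ∈ Cset (n - 1) ∧
              tupleProd (fun i : Fin (n - 1) => ρ (Fin.castLE (by omega) i)) = 1) ∨
            (fun i : Fin (n - 1) => ρ (Fin.castLE (by omega) i)) = rhoTilde (n - 1) ∅))
        (ρ ⟨n - 1, by omega⟩ = Equiv.swap 0 3 ∧
          (fun i : Fin (n - 1) => ρ (Fin.castLE (by omega) i)) ∈ Cset (n - 1) ∧
          tupleProd (fun i : Fin (n - 1) => ρ (Fin.castLE (by omega) i)) =
            Equiv.swap 0 3 * Equiv.swap 1 2) := by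
  obtain ⟨m, rfl⟩ : ∃ m, n = m + 1 := ⟨n - 1, by omega⟩
  have heven : Even m := by simpa [Nat.odd_add_one] using hodd
  show _ ↔ Xor
    (ρ (Fin.last m) = swap 1 2 ∧
      ((Fin.init ρ ∈ Cset m ∧ tupleProd (Fin.init ρ) = 1) ∨ Fin.init ρ = rhoTilde m ∅))
    (ρ (Fin.last m) = swap 0 3 ∧ Fin.init ρ ∈ Cset m ∧
      tupleProd (Fin.init ρ) = swap 0 3 * swap 1 2)
  have hne : (swap 1 2 : Perm (Fin 4)) ≠ swap 0 3 := by decide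
  rcases eq_or_ne (ρ (Fin.last m)) (swap 1 2) with h12 | h12
  · simp [xor_def, h12, hne,
      mem_Cset_and_tupleProd_eq_swap12_iff_of_last_eq_swap12 (by omega) heven h12]
  rcases eq_or_ne (ρ (Fin.last m)) (swap 0 3) with h03 | h03
  · simp [xor_def, h03, hne.symm,
      mem_Cset_and_tupleProd_eq_swap12_iff_of_last_eq_swap03 (by omega) heven h03]
  have hlast : ρ ∉ Cset (m + 1) := fun hρ =>
    ((mem_Cset_iff.1 hρ).1.2 (Fin.last m) (by rw [Fin.val_last]; omega)).elim h12 h03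
  simp [h12, h03, hlast]
end

section
/- Let α be a type, n ≥ 2, and ρ an n-tuple of permutations of α. If for some 0 ≤ i ≤ n−2 the entries ρ_i and ρ_{i+1} are transpositions (swaps of two distinct points) that do not commute, then applying the i-th Hurwitz twist three times returns the original tuple: T_i(T_i(T_i(ρ))) = ρ. (This is the combinatorial content of the local move M: the braid β_i^3 acts trivially on such colorings.) -/
/-! In any group, three Hurwitz twists `T_i` fix a tuple as soon as its entries `a, b` at
positions `i, i + 1` satisfy the braid relation `a b a = b a b`. Two non-commuting
transpositions share exactly one point, so they are `swap x y` and `swap y z` with `x, y, z`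
distinct, and they satisfy the braid relation. -/

open Equiv

-- Both sides equal `swap x z`.
theorem Equiv.swap_braid {α : Type*} [DecidableEq α] {x y z : α}
    (hxy : x ≠ y) (hyz : y ≠ z) (hxz : x ≠ z) :
    swap x y * swap y z * swap x y = swap y z * swap x y * swap y z := by
  rw [swap_mul_swap_mul_swap hxy hxz, swap_comm x y, swap_comm y z,
    swap_mul_swap_mul_swap hyz.symm hxz.symm, swap_comm]

theorem Equiv.Perm.IsSwap.mul_mul_eq_of_not_commute {α : Type*} [DecidableEq α] {a b : Perm α}
    (ha : a.IsSwap) (hb : b.IsSwap) (h : ¬Commute a b) : a * b * a = b * a * b := by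
  obtain ⟨x, y, hxy, rfl⟩ := ha
  obtain ⟨z, w, hzw, rfl⟩ := hb
  rcases eq_or_ne x z with rfl | hxz
  · rcases eq_or_ne y w with rfl | hyw
    · exact absurd (Commute.refl _) h
    · rw [swap_comm x y]
      exact swap_braid hxy.symm hzw hyw
  rcases eq_or_ne x w with rfl | hxw
  · rcases eq_or_ne y z with rfl | hyz
    · exact absurd (by rw [swap_comm]) h
    · rw [swap_comm x y, swap_comm z x]
      exact swap_braid hxy.symm hzw.symm hyz
  rcases eq_or_ne y z with rfl | hyz
  · exact swap_braid hxy hzw hxw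
  rcases eq_or_ne y w with rfl | hyw
  · rw [swap_comm z y]
    exact swap_braid hxy hzw.symm hxz
  · exact absurd (disjoint_swap_swap (by simp [*])).commute h

section HurwitzTwist

variable {G : Type*} [Group G] {n : ℕ} (i : Fin (n - 1)) (ρ : Fin n → G)

theorem hurwitzTwist_apply_left :
    hurwitzTwist i ρ ⟨i, by omega⟩ =
      ρ ⟨i, by omega⟩ * ρ ⟨i + 1, by omega⟩ * (ρ ⟨i, by omega⟩)⁻¹ := by
  simp [hurwitzTwist]

theorem hurwitzTwist_apply_right : hurwitzTwist i ρ ⟨i + 1, by omega⟩ = ρ ⟨i, by omega⟩ := by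
  simp [hurwitzTwist]

theorem hurwitzTwist_apply_of_ne {k : Fin n} (h : (k : ℕ) ≠ i) (h' : (k : ℕ) ≠ i + 1) :
    hurwitzTwist i ρ k = ρ k := by
  simp [hurwitzTwist, h, h']

/- `T_i` acts on the pair `(a, b)` at positions `i, i + 1` by `(a, b) ↦ (a b a⁻¹, a)`, so
`T_i² (a, b) = (a b a b⁻¹ a⁻¹, a b a⁻¹)`; the braid relation turns this into `(b, a b a⁻¹)`,
and then `T_i³ (a, b) = (b a b a⁻¹ b⁻¹, b) = (a, b)`. -/
theorem hurwitzTwist_hurwitzTwist_hurwitzTwist_of_braid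
    (h : ρ ⟨i, by omega⟩ * ρ ⟨i + 1, by omega⟩ * ρ ⟨i, by omega⟩ =
      ρ ⟨i + 1, by omega⟩ * ρ ⟨i, by omega⟩ * ρ ⟨i + 1, by omega⟩) :
    hurwitzTwist i (hurwitzTwist i (hurwitzTwist i ρ)) = ρ := by
  generalize ha : ρ ⟨i, by omega⟩ = a at h
  generalize hb : ρ ⟨i + 1, by omega⟩ = b at h
  have twice : a * b * a⁻¹ * a * (a * b * a⁻¹)⁻¹ = b :=
    calc _ = a * b * a * b⁻¹ * a⁻¹ := by group
      _ = b := by rw [h]; group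
  have thrice : b * (a * b * a⁻¹) * b⁻¹ = a :=
    calc _ = b * a * b * a⁻¹ * b⁻¹ := by group
      _ = a := by rw [← h]; group
  funext k
  by_cases hk : (k : ℕ) = i
  · rw [show k = ⟨i, by omega⟩ from Fin.ext hk]
    simp only [hurwitzTwist_apply_left, hurwitzTwist_apply_right, ha, hb, twice, thrice]
  by_cases hk' : (k : ℕ) = i + 1
  · rw [show k = ⟨i + 1, by omega⟩ from Fin.ext hk']
    simp only [hurwitzTwist_apply_left, hurwitzTwist_apply_right, ha, hb, twice]
  simp only [hurwitzTwist_apply_of_ne i _ hk hk']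

end HurwitzTwist

/-- Combinatorial content of the local move `M`: if the entries at positions `i` and `i+1`
are non-commuting transpositions, then the `i`-th Hurwitz twist has order dividing 3 at
that tuple. -/
theorem stmt15 (α : Type*) [DecidableEq α] (n : ℕ)
    (ρ : Fin n → Perm α) (i : Fin (n - 1))
    (h1 : (ρ ⟨(i : ℕ), by have := i.isLt; omega⟩).IsSwap)
    (h2 : (ρ ⟨(i : ℕ) + 1, by have := i.isLt; omega⟩).IsSwap)
    (hnc : ρ ⟨(i : ℕ), by have := i.isLt; omega⟩ *
        ρ ⟨(i : ℕ) + 1, by have := i.isLt; omega⟩ ≠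
      ρ ⟨(i : ℕ) + 1, by have := i.isLt; omega⟩ *
        ρ ⟨(i : ℕ), by have := i.isLt; omega⟩) :
    hurwitzTwist i (hurwitzTwist i (hurwitzTwist i ρ)) = ρ :=
  hurwitzTwist_hurwitzTwist_hurwitzTwist_of_braid i ρ (h1.mul_mul_eq_of_not_commute h2 hnc)
end

section
/- Let n ≥ 2 and let ρ ∈ C^n, and let a = #{i : 2 ≤ i ≤ n−1 and ρ_i = (1 4)}. Then the boundary monodromy μ(ρ) equals: the identity if n is even and a is even; (1 4)(2 3) if n is even and a is odd; (2 3) if n is odd and a is even; and (1 4) if n is odd and a is odd. -/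
/-!
The two leading entries `(1 2)` cancel, and the remaining entries are the commuting involutions
`(2 3)` and `(1 4)`, occurring `n - 2 - a` and `a` times. Hence
`μ(ρ) = (2 3)^(n - 2 - a) (1 4)^a`, and each factor is trivial or not according to the parity
of its exponent; `n - 2 - a` is even iff `n` and `a` have the same parity.
-/

open Equiv

open Finset

section Monoid

variable {M : Type*} [Monoid M]

theorem pow_eq_ite_even_of_mul_self_eq_one {x : M} (hx : x * x = 1) (k : ℕ) :
    x ^ k = if Even k then 1 else x := by
  obtain ⟨r, rfl | rfl⟩ := Nat.even_or_odd' k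
  · simp [pow_mul, sq, hx]
  · simp [pow_succ, pow_mul, hx]

theorem List.prod_ofFn_ite_of_commute {x y : M} (hxy : Commute x y) {m : ℕ}
    (p : Fin m → Prop) [DecidablePred p] :
    (List.ofFn fun i => if p i then y else x).prod = x ^ #{i | ¬ p i} * y ^ #{i | p i} := by
  induction m with
  | zero => simp
  | succ m ih =>
    rw [List.ofFn_succ, List.prod_cons, ih, Fin.card_filter_univ_succ p,
      Fin.card_filter_univ_succ (fun i => ¬ p i)]
    by_cases h0 : p 0
    · simp [h0, pow_succ', ← mul_assoc, (hxy.symm.pow_right _).eq]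
    · simp [h0, pow_succ', mul_assoc]

end Monoid

theorem tupleProd_cons_cons {M : Type*} [Monoid M] {m : ℕ} (ρ : Fin (m + 2) → M) :
    tupleProd ρ = ρ 0 * ρ 1 * tupleProd fun i : Fin m => ρ i.succ.succ := by
  simp [tupleProd, List.ofFn_succ, mul_assoc]

theorem Fin.card_filter_two_le_and {m : ℕ} (q : Fin (m + 2) → Prop) [DecidablePred q] :
    #{i : Fin (m + 2) | 2 ≤ (i : ℕ) ∧ q i} = #{i : Fin m | q i.succ.succ} := by
  simp [Fin.card_filter_univ_succ]

theorem swap_one_two_commute_swap_zero_three : Commute (swap (1 : Fin 4) 2) (swap 0 3) :=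
  (by decide : swap (1 : Fin 4) 2 * swap 0 3 = swap 0 3 * swap 1 2)

theorem tupleProd_eq_of_mem_Cset {m : ℕ} {ρ : Fin (m + 2) → Perm (Fin 4)}
    (hρ : ρ ∈ Cset (m + 2)) :
    tupleProd ρ = swap 1 2 ^ #{i : Fin m | ρ i.succ.succ ≠ swap 0 3} *
      swap 0 3 ^ #{i : Fin m | ρ i.succ.succ = swap 0 3} := by
  obtain ⟨hhead, htail, -⟩ := hρ
  have htail' : (fun i : Fin m => ρ i.succ.succ) =
      fun i => if ρ i.succ.succ = swap 0 3 then swap 0 3 else swap 1 2 := by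
    funext i
    rcases htail i.succ.succ (by simp) with h | h <;> simp [h]
  rw [tupleProd_cons_cons, hhead 0 (by simp), hhead 1 (by simp), swap_mul_self, one_mul,
    tupleProd, htail', List.prod_ofFn_ite_of_commute swap_one_two_commute_swap_zero_three]

/-- The boundary monodromy of `ρ ∈ C^n` in terms of the parities of `n` and of the number
`a` of entries equal to `(1 4)`. -/
theorem stmt18 (n : ℕ) (hn : 2 ≤ n) (ρ : Fin n → Perm (Fin 4)) (hρ : ρ ∈ Cset n)
    (a : ℕ)
    (ha : a = (Finset.univ.filter
      (fun i : Fin n => 2 ≤ (i : ℕ) ∧ ρ i = Equiv.swap 0 3)).card) :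
    (Even n → Even a → tupleProd ρ = 1) ∧
    (Even n → ¬ Even a → tupleProd ρ = Equiv.swap 0 3 * Equiv.swap 1 2) ∧
    (¬ Even n → Even a → tupleProd ρ = Equiv.swap 1 2) ∧
    (¬ Even n → ¬ Even a → tupleProd ρ = Equiv.swap 0 3) := by
  obtain ⟨m, rfl⟩ := Nat.exists_eq_add_of_le' hn
  rw [Fin.card_filter_two_le_and] at ha
  have ha_le : a ≤ m := by
    simpa [ha] using card_filter_le (univ : Finset (Fin m)) fun i => ρ i.succ.succ = swap 0 3
  have hprod := tupleProd_eq_of_mem_Cset hρ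
  rw [filter_not, card_univ_sdiff, Fintype.card_fin, ← ha,
    pow_eq_ite_even_of_mul_self_eq_one (swap_mul_self 1 2),
    pow_eq_ite_even_of_mul_self_eq_one (swap_mul_self 0 3)] at hprod
  simp only [Nat.even_add, Nat.even_sub ha_le, even_two, iff_true] at hprod ⊢
  refine ⟨fun hm ha' => ?_, fun hm ha' => ?_, fun hm ha' => ?_, fun hm ha' => ?_⟩ <;>
    simp [hprod, hm, ha', swap_one_two_commute_swap_zero_three.eq]
end
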